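/- Let n ≥ 1, λ_1,…,λ_n pairwise distinct reals, α_1,…,α_n reals, and let y_1,…,y_n, f_1,…,f_n : ℝ × I → ℝ be smooth (I an open interval, 0 ∉ I) satisfying the system (yfx), the system (yft), and the constraint (uy'). Fix k and suppose y_k is nowhere vanishing. Define (the transformation A_k): ỹ_j := y_j for all j, f̃_j := f_j for j ≠ k, f̃_k := f_k − α_k/y_k, α̃_j := α_j for j ≠ k, α̃_k := −α_k. Then (ỹ_j, f̃_j) satisfy (yfx), (yft) and (uy') with parameters α̃_1,…,α̃_n and the same λ_1,…,λ_n. -/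

import Mathlib

open Set Function

noncomputable section

/-- Partial derivative in the first (space) variable. -/
def pdx (u : ℝ → ℝ → ℝ) : ℝ → ℝ → ℝ := fun x t => deriv (fun x' => u x' t) x

/-- Partial derivative in the second (time) variable. -/
def pdt (u : ℝ → ℝ → ℝ) : ℝ → ℝ → ℝ := fun x t => deriv (fun t' => u x t') t

/-- The constraint (uy'): `u = x/(6t) + (y₁ + ⋯ + yₙ)/(3t)`. -/
def ucon (n : ℕ) (y : Fin n → ℝ → ℝ → ℝ) : ℝ → ℝ → ℝ :=
  fun x t => x / (6*t) + (∑ j, y j x t) / (3*t)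

/-!
`A_k` changes neither `y` nor `u`, only `f_k` and `α_k`. Writing `f̃ = f - α/y`, the
Riccati pair `y_x = 2yf - α`, `f_x = u - f² - λ` becomes `y_x = 2yf̃ + α`, `f̃_x = u - f̃² - λ`
by direct differentiation. For the time equation,
`f̃_t = f_t + α y_t / y²` while the flux changes by `∂ₓ(2α(u + 2λ)/y) = α(2u_x y - 2(u + 2λ)y_x)/y²`,
and these two corrections agree precisely because of the time equation for `y`.
-/

theorem HasDerivAt.sub_const_div {F Y : ℝ → ℝ} {F' Y' s : ℝ} (c : ℝ)
    (hF : HasDerivAt F F' s) (hY : HasDerivAt Y Y' s) (hY0 : Y s ≠ 0) :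
    HasDerivAt (fun s => F s - c / Y s) (F' + c * Y' / Y s ^ 2) s := by
  have h : HasDerivAt (fun s => F s - c * (Y s)⁻¹) (F' - c * (-Y' / Y s ^ 2)) s :=
    hF.sub ((hY.inv hY0).const_mul c)
  simp only [← div_eq_mul_inv] at h
  exact h.congr_deriv (by ring)

theorem HasDerivAt.riccati_sub_const_div {F Y : ℝ → ℝ} {F' Y' s U α μ : ℝ}
    (hF : HasDerivAt F F' s) (hY : HasDerivAt Y Y' s) (hY0 : Y s ≠ 0)
    (hY' : Y' = 2 * Y s * F s - α) (hF' : F' = U - F s ^ 2 - μ) :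
    HasDerivAt (fun s => F s - α / Y s) (U - (F s - α / Y s) ^ 2 - μ) s := by
  convert hF.sub_const_div α hY hY0 using 1
  rw [hY', hF']
  field_simp
  ring

theorem HasDerivAt.flux_sub_const_div {V U F Y : ℝ → ℝ} {D U' Y' x μ : ℝ} (α : ℝ)
    (hG : HasDerivAt (fun x' => V x' - 2 * (U x' + 2 * μ) * F x') D x)
    (hU : HasDerivAt U U' x) (hY : HasDerivAt Y Y' x) (hY0 : Y x ≠ 0) :
    HasDerivAt (fun x' => V x' - 2 * (U x' + 2 * μ) * (F x' - α / Y x'))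
      (D + α * (2 * U' * Y x - 2 * (U x + 2 * μ) * Y') / Y x ^ 2) x := by
  have h : HasDerivAt (fun x' => V x' - 2 * (U x' + 2 * μ) * F x' + 2 * α * (U x' + 2 * μ) / Y x')
      (D + (2 * α * U' * Y x - 2 * α * (U x + 2 * μ) * Y') / Y x ^ 2) x :=
    hG.add (((hU.add_const (2 * μ)).const_mul (2 * α)).div hY hY0)
  have hfun : (fun x' => V x' - 2 * (U x' + 2 * μ) * (F x' - α / Y x'))
      = fun x' => V x' - 2 * (U x' + 2 * μ) * F x' + 2 * α * (U x' + 2 * μ) / Y x' := by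
    ext x'
    ring
  rw [hfun]
  exact h.congr_deriv (by ring)

section PartialDerivatives

variable {g : ℝ → ℝ → ℝ} {x t : ℝ}

theorem hasDerivAt_pdx (hg : DifferentiableAt ℝ (uncurry g) (x, t)) :
    HasDerivAt (fun x' => g x' t) (pdx g x t) x := by
  have h := hg.comp x ((differentiableAt_id (𝕜 := ℝ) (x := x)).prodMk (differentiableAt_const t))
  exact h.hasDerivAt

theorem hasDerivAt_pdt (hg : DifferentiableAt ℝ (uncurry g) (x, t)) :
    HasDerivAt (fun t' => g x t') (pdt g x t) t := by
  have h := hg.comp t ((differentiableAt_const x).prodMk differentiableAt_id)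
  exact h.hasDerivAt

end PartialDerivatives

section Constraint

variable {n : ℕ} {y : Fin n → ℝ → ℝ → ℝ} {x t : ℝ}

theorem hasDerivAt_ucon {y' : Fin n → ℝ} (hy : ∀ j, HasDerivAt (fun x' => y j x' t) (y' j) x) :
    HasDerivAt (fun x' => ucon n y x' t) (1 / (6 * t) + (∑ j, y' j) / (3 * t)) x :=
  ((hasDerivAt_id' x).div_const (6 * t)).add
    ((HasDerivAt.fun_sum fun j _ => hy j).div_const (3 * t))

theorem differentiableAt_pdx_ucon {f : Fin n → ℝ → ℝ → ℝ} {alp : Fin n → ℝ}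
    (hy : ∀ j x, DifferentiableAt ℝ (uncurry (y j)) (x, t))
    (hf : ∀ j x, DifferentiableAt ℝ (uncurry (f j)) (x, t))
    (hyfx : ∀ j x, pdx (y j) x t = 2 * y j x t * f j x t - alp j) :
    DifferentiableAt ℝ (fun x' => pdx (ucon n y) x' t) x := by
  have hpdx : (fun x' => pdx (ucon n y) x' t)
      = fun x' => 1 / (6 * t) + (∑ j, (2 * y j x' t * f j x' t - alp j)) / (3 * t) := by
    ext x'
    rw [show pdx (ucon n y) x' t = _ from (hasDerivAt_ucon fun j => hasDerivAt_pdx (hy j x')).deriv]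
    simp only [hyfx]
  rw [hpdx]
  refine (DifferentiableAt.fun_sum fun j _ => ?_).div_const _ |>.const_add _
  exact (((hasDerivAt_pdx (hy j x)).differentiableAt.const_mul 2).mul
    (hasDerivAt_pdx (hf j x)).differentiableAt).sub_const _

theorem pdt_sub_const_div_eq_pdx_flux {f : Fin n → ℝ → ℝ → ℝ} {alp : Fin n → ℝ} {j : Fin n}
    {μ : ℝ} (c : ℝ)
    (hy : ∀ i x, DifferentiableAt ℝ (uncurry (y i)) (x, t))
    (hf : ∀ i x, DifferentiableAt ℝ (uncurry (f i)) (x, t))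
    (hyfx : ∀ i x, pdx (y i) x t = 2 * y i x t * f i x t - alp i)
    (hyt : pdt (y j) x t
      = 2 * pdx (ucon n y) x t * y j x t - 2 * (ucon n y x t + 2 * μ) * pdx (y j) x t)
    (hft : pdt (f j) x t
      = pdx (fun x' t' => pdx (ucon n y) x' t' - 2 * (ucon n y x' t' + 2 * μ) * f j x' t') x t)
    (hY : y j x t ≠ 0) :
    pdt (fun x t => f j x t - c / y j x t) x t
      = pdx (fun x' t' => pdx (ucon n y) x' t'
          - 2 * (ucon n y x' t' + 2 * μ) * (f j x' t' - c / y j x' t')) x t := by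
  have hUx : HasDerivAt (fun x' => ucon n y x' t) (pdx (ucon n y) x t) x :=
    (hasDerivAt_ucon fun i => hasDerivAt_pdx (hy i x)).differentiableAt.hasDerivAt
  have hG : HasDerivAt (fun x' => pdx (ucon n y) x' t
      - 2 * (ucon n y x' t + 2 * μ) * f j x' t) (pdt (f j) x t) x := by
    rw [hft]
    exact ((differentiableAt_pdx_ucon hy hf hyfx).sub ((hUx.differentiableAt.add_const _).const_mul 2
      |>.mul (hasDerivAt_pdx (hf j x)).differentiableAt)).hasDerivAt
  calc pdt (fun x t => f j x t - c / y j x t) x t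
      = pdt (f j) x t + c * pdt (y j) x t / y j x t ^ 2 :=
        ((hasDerivAt_pdt (hf j x)).sub_const_div c (hasDerivAt_pdt (hy j x)) hY).deriv
    _ = _ := by
        rw [hyt]
        exact (hG.flux_sub_const_div c hUx (hasDerivAt_pdx (hy j x)) hY).deriv.symm

end Constraint

theorem statement14_general
    (n : ℕ)
    (lam alp : Fin n → ℝ)
    (a b : ℝ) (I : Set ℝ) (hI : I = Set.Ioo a b)
    (y f : Fin n → ℝ → ℝ → ℝ)
    (hysmooth : ∀ j, ContDiffOn ℝ (⊤ : ℕ∞) (uncurry (y j)) (univ ×ˢ I))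
    (hfsmooth : ∀ j, ContDiffOn ℝ (⊤ : ℕ∞) (uncurry (f j)) (univ ×ˢ I))
    -- system (yfx)
    (hyfx : ∀ j x t, t ∈ I →
      pdx (y j) x t = 2 * y j x t * f j x t - alp j
      ∧ pdx (f j) x t = ucon n y x t - (f j x t)^2 - lam j)
    -- system (yft)
    (hyft : ∀ j x t, t ∈ I →
      pdt (y j) x t
        = 2 * pdx (ucon n y) x t * y j x t
          - 2 * (ucon n y x t + 2*lam j) * pdx (y j) x t
      ∧ pdt (f j) x t
        = pdx (fun x' t' => pdx (ucon n y) x' t'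
            - 2*(ucon n y x' t' + 2*lam j) * f j x' t') x t)
    (k : Fin n)
    (hykne : ∀ x t, t ∈ I → y k x t ≠ 0)
    -- the transformation A_k
    (ny nf : Fin n → ℝ → ℝ → ℝ) (nalp : Fin n → ℝ)
    (hny : ∀ j, ny j = y j)
    (hnf : ∀ j, j ≠ k → nf j = f j)
    (hnfk : ∀ x t, nf k x t = f k x t - alp k / y k x t)
    (hnalp : ∀ j, j ≠ k → nalp j = alp j) (hnalpk : nalp k = -alp k) :
    -- the transformed data satisfies (yfx), (yft) with (uy')
    (∀ j x t, t ∈ I →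
      pdx (ny j) x t = 2 * ny j x t * nf j x t - nalp j
      ∧ pdx (nf j) x t = ucon n ny x t - (nf j x t)^2 - lam j)
    ∧ (∀ j x t, t ∈ I →
      pdt (ny j) x t
        = 2 * pdx (ucon n ny) x t * ny j x t
          - 2 * (ucon n ny x t + 2*lam j) * pdx (ny j) x t
      ∧ pdt (nf j) x t
        = pdx (fun x' t' => pdx (ucon n ny) x' t'
            - 2*(ucon n ny x' t' + 2*lam j) * nf j x' t') x t) := by
  obtain rfl : y = ny := (funext hny).symm
  have hnfk' : nf k = fun x t => f k x t - alp k / y k x t := funext₂ hnfk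
  have hopen : IsOpen (univ ×ˢ I : Set (ℝ × ℝ)) := isOpen_univ.prod (hI ▸ isOpen_Ioo)
  have hdiff {g : ℝ → ℝ → ℝ} (hg : ContDiffOn ℝ (⊤ : ℕ∞) (uncurry g) (univ ×ˢ I)) {x t : ℝ}
      (ht : t ∈ I) : DifferentiableAt ℝ (uncurry g) (x, t) :=
    (hg.differentiableOn (by simp)).differentiableAt (hopen.mem_nhds ⟨trivial, ht⟩)
  have hy j (x : ℝ) {t} (ht : t ∈ I) := hdiff (hysmooth j) (x := x) ht
  have hf j (x : ℝ) {t} (ht : t ∈ I) := hdiff (hfsmooth j) (x := x) ht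
  refine ⟨fun j x t ht => ?_, fun j x t ht => ⟨(hyft j x t ht).1, ?_⟩⟩
  · obtain rfl | hj := eq_or_ne j k
    · obtain ⟨hyx, hfx⟩ := hyfx j x t ht
      rw [hnfk', hnalpk]
      refine ⟨by rw [hyx]; field_simp [hykne x t ht]; ring, ?_⟩
      exact ((hasDerivAt_pdx (hf j x ht)).riccati_sub_const_div (hasDerivAt_pdx (hy j x ht))
        (hykne x t ht) hyx hfx).deriv
    · rw [hnf j hj, hnalp j hj]
      exact hyfx j x t ht
  · obtain rfl | hj := eq_or_ne j k
    · rw [hnfk']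
      exact pdt_sub_const_div_eq_pdx_flux _ (fun i x' => hy i x' ht) (fun i x' => hf i x' ht)
        (fun i x' => (hyfx i x' t ht).1) (hyft j x t ht).1 (hyft j x t ht).2 (hykne x t ht)
    · rw [hnf j hj]
      exact (hyft j x t ht).2

/-- the transformation `A_k` (`ỹⱼ = yⱼ`, `f̃ⱼ = fⱼ` for `j ≠ k`,
`f̃_k = f_k − α_k/y_k`, `α̃_k = −α_k`) maps solutions of (yfx), (yft), (uy') to solutions. -/
theorem statement14
    (n : ℕ) (hn : 1 ≤ n)
    (lam alp : Fin n → ℝ) (hlam : Function.Injective lam)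
    (a b : ℝ) (I : Set ℝ) (hI : I = Set.Ioo a b) (hI0 : (0:ℝ) ∉ I)
    (y f : Fin n → ℝ → ℝ → ℝ)
    (hysmooth : ∀ j, ContDiffOn ℝ (⊤ : ℕ∞) (uncurry (y j)) (univ ×ˢ I))
    (hfsmooth : ∀ j, ContDiffOn ℝ (⊤ : ℕ∞) (uncurry (f j)) (univ ×ˢ I))
    -- system (yfx)
    (hyfx : ∀ j x t, t ∈ I →
      pdx (y j) x t = 2 * y j x t * f j x t - alp j
      ∧ pdx (f j) x t = ucon n y x t - (f j x t)^2 - lam j)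
    -- system (yft)
    (hyft : ∀ j x t, t ∈ I →
      pdt (y j) x t
        = 2 * pdx (ucon n y) x t * y j x t
          - 2 * (ucon n y x t + 2*lam j) * pdx (y j) x t
      ∧ pdt (f j) x t
        = pdx (fun x' t' => pdx (ucon n y) x' t'
            - 2*(ucon n y x' t' + 2*lam j) * f j x' t') x t)
    (k : Fin n)
    (hykne : ∀ x t, t ∈ I → y k x t ≠ 0)
    -- the transformation A_k
    (ny nf : Fin n → ℝ → ℝ → ℝ) (nalp : Fin n → ℝ)
    (hny : ∀ j, ny j = y j)
    (hnf : ∀ j, j ≠ k → nf j = f j)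
    (hnfk : ∀ x t, nf k x t = f k x t - alp k / y k x t)
    (hnalp : ∀ j, j ≠ k → nalp j = alp j) (hnalpk : nalp k = -alp k) :
    -- the transformed data satisfies (yfx), (yft) with (uy')
    (∀ j x t, t ∈ I →
      pdx (ny j) x t = 2 * ny j x t * nf j x t - nalp j
      ∧ pdx (nf j) x t = ucon n ny x t - (nf j x t)^2 - lam j)
    ∧ (∀ j x t, t ∈ I →
      pdt (ny j) x t
        = 2 * pdx (ucon n ny) x t * ny j x t
          - 2 * (ucon n ny x t + 2*lam j) * pdx (ny j) x t
      ∧ pdt (nf j) x t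
        = pdx (fun x' t' => pdx (ucon n ny) x' t'
            - 2*(ucon n ny x' t' + 2*lam j) * nf j x' t') x t) :=
  statement14_general n lam alp a b I hI y f hysmooth hfsmooth hyfx hyft k hykne ny nf nalp hny hnf
    hnfk hnalp hnalpk
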